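/- In the K_4-bootstrap percolation process, if K_1 and K_2 are vertex sets each inducing a clique in G_t and |K_1 ∩ K_2| ≥ 2, then K_1 ∪ K_2 induces a clique in G_{t+1}. -/

import Mathlib

/-- One step of the `K_r`-bootstrap percolation process: we add every edge `uv` for which
there is an `r`-element vertex set `S` containing `u` and `v` such that every edge within `S`
other than `uv` is already present. -/
def bootStep {V : Type*} (r : ℕ) (G : SimpleGraph V) : SimpleGraph V where
  Adj u v := G.Adj u v ∨ (u ≠ v ∧ ∃ S : Finset V, S.card = r ∧ u ∈ S ∧ v ∈ S ∧
    ∀ x ∈ S, ∀ y ∈ S, x ≠ y → ¬((x = u ∧ y = v) ∨ (x = v ∧ y = u)) → G.Adj x y)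
  symm := by
    constructor
    intro a b h
    rcases h with h | ⟨hne, S, hS, ha, hb, hall⟩
    · exact Or.inl h.symm
    · refine Or.inr ⟨hne.symm, S, hS, hb, ha, ?_⟩
      intro x hx y hy hxy hno
      exact hall x hx y hy hxy (by tauto)
  loopless := by
    constructor
    intro a h
    rcases h with h | ⟨hne, _⟩
    · exact G.irrefl h
    · exact hne rfl

/-!
Let `u ∈ K₁ \ K₂` and `v ∈ K₂ \ K₁`, and pick two vertices `a, b ∈ K₁ ∩ K₂`. On `{u, v, a, b}`
every pair except `uv` lies in `K₁` or in `K₂`, so the step adds `uv`.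
-/

section

open Finset

variable {V : Type*}

theorem le_bootStep (r : ℕ) (G : SimpleGraph V) : G ≤ bootStep r G :=
  fun _ _ h => Or.inl h

theorem bootStep_adj_of_isClique_erase [DecidableEq V] {r : ℕ} {G : SimpleGraph V}
    {S : Finset V} {u v : V} (huv : u ≠ v) (hS : #S = r) (hu : u ∈ S) (hv : v ∈ S)
    (hSu : G.IsClique (S.erase u : Set V)) (hSv : G.IsClique (S.erase v : Set V)) :
    (bootStep r G).Adj u v := by
  refine Or.inr ⟨huv, S, hS, hu, hv, fun x hx y hy hxy hne => ?_⟩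
  -- every edge of `S` other than `uv` misses `u` or `v`
  by_cases hxv : x = v
  · subst hxv
    have hyu : y ≠ u := fun h => hne (Or.inr ⟨rfl, h⟩)
    exact hSu (mem_erase.2 ⟨huv.symm, hx⟩) (mem_erase.2 ⟨hyu, hy⟩) hxy
  by_cases hyv : y = v
  · subst hyv
    have hxu : x ≠ u := fun h => hne (Or.inl ⟨h, rfl⟩)
    exact hSu (mem_erase.2 ⟨hxu, hx⟩) (mem_erase.2 ⟨huv.symm, hy⟩) hxy
  exact hSv (mem_erase.2 ⟨hxv, hx⟩) (mem_erase.2 ⟨hyv, hy⟩) hxy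

theorem bootStep_adj_of_mem_sdiff [DecidableEq V] {r : ℕ} {G : SimpleGraph V}
    {K₁ K₂ : Finset V} (h₁ : G.IsClique (K₁ : Set V)) (h₂ : G.IsClique (K₂ : Set V))
    (hint : r ≤ #(K₁ ∩ K₂)) {u v : V} (hu₁ : u ∈ K₁) (hu₂ : u ∉ K₂) (hv₁ : v ∉ K₁)
    (hv₂ : v ∈ K₂) : (bootStep (r + 2) G).Adj u v := by
  obtain ⟨T, hT, hTcard⟩ := exists_subset_card_eq hint
  have huT : u ∉ T := fun h => hu₂ (mem_inter.1 (hT h)).2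
  have hvT : v ∉ T := fun h => hv₁ (mem_inter.1 (hT h)).1
  have huv : u ≠ v := fun h => hv₁ (h ▸ hu₁)
  have hTK₁ : T ⊆ K₁ := hT.trans inter_subset_left
  have hTK₂ : T ⊆ K₂ := hT.trans inter_subset_right
  refine bootStep_adj_of_isClique_erase (S := insert u (insert v T)) huv ?_ (mem_insert_self _ _)
    (mem_insert_of_mem (mem_insert_self _ _)) (h₂.subset ?_) (h₁.subset ?_)
  · rw [card_insert_of_notMem (by simp [huv, huT]), card_insert_of_notMem hvT, hTcard]
  · rw [erase_insert (by simp [huv, huT])]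
    exact_mod_cast insert_subset hv₂ hTK₂
  · rw [erase_insert_of_ne huv, erase_insert hvT]
    exact_mod_cast insert_subset hu₁ hTK₁

theorem SimpleGraph.IsClique.union_bootStep [DecidableEq V] {r : ℕ} {G : SimpleGraph V}
    {K₁ K₂ : Finset V} (h₁ : G.IsClique (K₁ : Set V)) (h₂ : G.IsClique (K₂ : Set V))
    (hint : r ≤ #(K₁ ∩ K₂)) : (bootStep (r + 2) G).IsClique ((K₁ ∪ K₂ : Finset V) : Set V) := by
  intro u hu v hv huv
  simp only [coe_union, Set.mem_union, mem_coe] at hu hv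
  by_cases hu₁ : u ∈ K₁ <;> by_cases hu₂ : u ∈ K₂ <;> by_cases hv₁ : v ∈ K₁ <;>
    by_cases hv₂ : v ∈ K₂ <;> simp only [hu₁, hu₂, hv₁, hv₂, or_false, false_or] at hu hv
  all_goals first
    | exact le_bootStep _ G (h₁ hu₁ hv₁ huv)
    | exact le_bootStep _ G (h₂ hu₂ hv₂ huv)
    | exact bootStep_adj_of_mem_sdiff h₁ h₂ hint hu₁ hu₂ hv₁ hv₂
    | exact (bootStep_adj_of_mem_sdiff h₁ h₂ hint hv₁ hv₂ hu₁ hu₂).symm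

end

/-- If `K₁` and `K₂` each induce cliques in `G_t` in the `K_4`-bootstrap process and
`|K₁ ∩ K₂| ≥ 2`, then `K₁ ∪ K₂` induces a clique in `G_{t+1}`. -/
theorem clique_merge {V : Type*} [DecidableEq V] (G : SimpleGraph V) (t : ℕ)
    (K₁ K₂ : Finset V)
    (h₁ : ((bootStep 4)^[t] G).IsClique (K₁ : Set V))
    (h₂ : ((bootStep 4)^[t] G).IsClique (K₂ : Set V))
    (hint : 2 ≤ (K₁ ∩ K₂).card) :
    ((bootStep 4)^[t + 1] G).IsClique ((K₁ ∪ K₂ : Finset V) : Set V) := by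
  rw [Function.iterate_succ_apply']
  exact h₁.union_bootStep h₂ hint
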